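/- arXiv:1802.01550 — 3 statements merged into one kernel-verified Lean document; each statement's English description precedes it below -/
import Mathlib

section
/- Let R be a commutative unital ring, G an ample groupoid, and suppose the groupoid convolution algebra RG is a prime ring. Then R is an integral domain. -/
/-!
Every value of a triple convolution `φ ⋆ ψ ⋆ χ` lies in the product of the ideals generated by
the values of `φ` and of `χ`. So if `a * b = 0` in `R` and `1_U` is the characteristic function
of a non-empty compact open set, then `(a • 1_U) ⋆ ψ ⋆ (b • 1_U) = 0` for all `ψ`, and primeness
of `RG` forces `a = 0` or `b = 0`. Such a `U` exists because `RG ≠ 0`.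
-/

universe u

/-- An étale topological groupoid: arrows form a topological space, units are
identified with idempotent arrows via the domain map `d` and range map `r`;
the domain map is a local homeomorphism. -/
structure EtaleGroupoid : Type (u + 1) where
  Arr : Type u
  top : TopologicalSpace Arr
  d : Arr → Arr
  r : Arr → Arr
  comp : Arr → Arr → Arr
  inv : Arr → Arr
  d_d : ∀ g, d (d g) = d g
  r_d : ∀ g, r (d g) = d g
  d_r : ∀ g, d (r g) = r g
  r_r : ∀ g, r (r g) = r g
  d_comp : ∀ g h, d g = r h → d (comp g h) = d h
  r_comp : ∀ g h, d g = r h → r (comp g h) = r g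
  comp_assoc : ∀ g h k, d g = r h → d h = r k → comp (comp g h) k = comp g (comp h k)
  comp_unit_right : ∀ g, comp g (d g) = g
  comp_unit_left : ∀ g, comp (r g) g = g
  d_inv : ∀ g, d (inv g) = r g
  r_inv : ∀ g, r (inv g) = d g
  inv_inv : ∀ g, inv (inv g) = g
  inv_comp : ∀ g, comp (inv g) g = d g
  comp_inv : ∀ g, comp g (inv g) = r g
  continuous_d : @Continuous Arr Arr top top d
  continuous_r : @Continuous Arr Arr top top r
  continuous_inv : @Continuous Arr Arr top top inv
  continuous_comp : @Continuous {p : Arr × Arr // d p.1 = r p.2} Arr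
    (@instTopologicalSpaceSubtype _ _ (@instTopologicalSpaceProd _ _ top top)) top
    (fun p => comp p.val.1 p.val.2)
  etale : ∀ g : Arr, ∃ U : Set Arr, @IsOpen Arr top U ∧ g ∈ U ∧ Set.InjOn d U ∧
    ∀ V, V ⊆ U → @IsOpen Arr top V → @IsOpen Arr top (d '' V)

instance (G : EtaleGroupoid) : TopologicalSpace G.Arr := G.top

namespace EtaleGroupoid

variable (G : EtaleGroupoid)

/-- The unit space `G⁽⁰⁾`, identified with the set of unit arrows. -/
def units : Set G.Arr := Set.range G.d

/-- A subset of the unit space is invariant if it is a union of orbits. -/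
def Invariant (X : Set G.Arr) : Prop := ∀ g : G.Arr, G.d g ∈ X → G.r g ∈ X

/-- The orbit of a unit `x`. -/
def orbit (x : G.Arr) : Set G.Arr := {y | ∃ g, G.d g = x ∧ G.r g = y}

/-- `U` is an open subset of the unit space (open in the subspace topology). -/
def UnitsOpen (U : Set G.Arr) : Prop :=
  U ⊆ G.units ∧ IsOpen (Subtype.val ⁻¹' U : Set ↥G.units)

/-- `C` is a closed subset of the unit space (closed in the subspace topology). -/
def UnitsClosed (C : Set G.Arr) : Prop :=
  C ⊆ G.units ∧ IsClosed (Subtype.val ⁻¹' C : Set ↥G.units)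

/-- `X` is dense in the unit space. -/
def UnitsDense (X : Set G.Arr) : Prop :=
  Dense (Subtype.val ⁻¹' X : Set ↥G.units)

/-- `X` is nowhere dense in the unit space. -/
def UnitsNowhereDense (X : Set G.Arr) : Prop :=
  interior (closure (Subtype.val ⁻¹' X : Set ↥G.units)) = ∅

/-- Topological transitivity: every non-empty open invariant subset of the
unit space is dense. -/
def TopTransitive : Prop :=
  ∀ U : Set G.Arr, G.UnitsOpen U → G.Invariant U → U.Nonempty → G.UnitsDense U

end EtaleGroupoid

namespace EtaleGroupoid

variable (G : EtaleGroupoid)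

/-- The underlying set of the groupoid convolution algebra `RG`: the `R`-span of
characteristic functions of compact open subsets of the arrow space. -/
def AlgebraSet (R : Type) [CommRing R] : Set (G.Arr → R) :=
  (Submodule.span R {f : G.Arr → R | ∃ U : Set G.Arr,
      IsCompact U ∧ IsOpen U ∧ f = Set.indicator U fun _ => (1 : R)} :
    Submodule R (G.Arr → R))

/-- Convolution: `(f ⋆ g)(x) = ∑_{d h = d x} f (x h⁻¹) g (h)`. -/
noncomputable def conv {R : Type} [CommRing R] (f g : G.Arr → R) : G.Arr → R := fun x =>
  ∑ᶠ (h : G.Arr) (_ : G.d h = G.d x), f (G.comp x (G.inv h)) * g h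

/-- The convolution algebra `RG` is a prime ring (elementwise formulation). -/
def AlgPrime (R : Type) [CommRing R] : Prop :=
  (∃ f ∈ G.AlgebraSet R, f ≠ 0) ∧
  ∀ f ∈ G.AlgebraSet R, ∀ g ∈ G.AlgebraSet R,
    (∀ h ∈ G.AlgebraSet R, G.conv (G.conv f h) g = 0) → f = 0 ∨ g = 0

/-- The convolution algebra `RG` is a semiprime ring (elementwise formulation). -/
def AlgSemiprime (R : Type) [CommRing R] : Prop :=
  ∀ f ∈ G.AlgebraSet R, (∀ h ∈ G.AlgebraSet R, G.conv (G.conv f h) f = 0) → f = 0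

/-- `X ⊆ G⁽⁰⁾` is `R`-dense: every non-zero element of `RG` is non-zero at some
arrow whose domain lies in `X`. -/
def RDense (R : Type) [CommRing R] (X : Set G.Arr) : Prop :=
  ∀ f ∈ G.AlgebraSet R, f ≠ (0 : G.Arr → R) → ∃ g : G.Arr, f g ≠ 0 ∧ G.d g ∈ X

/-- An étale groupoid is ample if its unit space is (locally compact) Hausdorff
with a basis of compact open sets. -/
def Ample : Prop :=
  T2Space ↥G.units ∧
  ∀ x ∈ G.units, ∀ U : Set G.Arr, G.UnitsOpen U → x ∈ U →
    ∃ K : Set G.Arr, K ⊆ U ∧ x ∈ K ∧ IsCompact K ∧ G.UnitsOpen K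

/-- A groupoid is effective if the interior of the isotropy bundle is the unit
space. -/
def Effective : Prop := interior {g : G.Arr | G.d g = G.r g} = G.units

end EtaleGroupoid

namespace EtaleGroupoid

variable {R : Type} [CommRing R] (G : EtaleGroupoid)

lemma conv_apply_mem_mul {I J : Ideal R} {f g : G.Arr → R} (hf : ∀ x, f x ∈ I)
    (hg : ∀ x, g x ∈ J) (x : G.Arr) : G.conv f g x ∈ I * J :=
  finsum_induction (· ∈ I * J) (zero_mem _) (fun _ _ => add_mem) fun _ =>
    finsum_induction (· ∈ I * J) (zero_mem _) (fun _ _ => add_mem) fun _ =>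
      Ideal.mul_mem_mul (hf _) (hg _)

lemma conv_conv_smul_eq_zero {a b : R} (hab : a * b = 0) (f h g : G.Arr → R) :
    G.conv (G.conv (a • f) h) (b • g) = 0 := by
  have hmem : ∀ x, G.conv (G.conv (a • f) h) (b • g) x ∈ Ideal.span {a} * ⊤ * Ideal.span {b} :=
    G.conv_apply_mem_mul
      (G.conv_apply_mem_mul (fun y => Ideal.mem_span_singleton'.2 ⟨f y, mul_comm _ _⟩)
        fun _ => Submodule.mem_top)
      fun y => Ideal.mem_span_singleton'.2 ⟨g y, mul_comm _ _⟩
  rw [Ideal.mul_top, Ideal.span_singleton_mul_span_singleton, hab,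
    Ideal.span_singleton_eq_bot.2 rfl] at hmem
  exact funext fun x => (Submodule.mem_bot R).1 (hmem x)

lemma exists_compact_open_nonempty_of_mem_algebraSet {f : G.Arr → R}
    (hf : f ∈ G.AlgebraSet R) (hf0 : f ≠ 0) :
    ∃ U : Set G.Arr, IsCompact U ∧ IsOpen U ∧ U.Nonempty := by
  by_contra! hempty
  refine hf0 ((Submodule.mem_bot R).1 ?_)
  rw [← Submodule.span_eq_bot.2 ?_]
  · exact hf
  · rintro _ ⟨U, hUc, hUo, rfl⟩
    rw [hempty U hUc hUo, Set.indicator_empty]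
    rfl

end EtaleGroupoid

theorem stmt5_general (R : Type) [CommRing R] (G : EtaleGroupoid)
    (hprime : G.AlgPrime R) : IsDomain R := by
  obtain ⟨⟨f, hf, hf0⟩, hprime⟩ := hprime
  have : Nontrivial R := by
    obtain ⟨x, hx⟩ := Function.ne_iff.1 hf0
    exact nontrivial_of_ne _ _ hx
  obtain ⟨U, hUc, hUo, x, hxU⟩ := G.exists_compact_open_nonempty_of_mem_algebraSet hf hf0
  set u : G.Arr → R := U.indicator fun _ => 1
  have hu : u ∈ G.AlgebraSet R := Submodule.subset_span ⟨U, hUc, hUo, rfl⟩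
  have : NoZeroDivisors R := by
    refine ⟨fun {a b} hab => ?_⟩
    have hsmul (c : R) : c • u ∈ G.AlgebraSet R := Submodule.smul_mem _ c hu
    refine (hprime _ (hsmul a) _ (hsmul b) fun h _ => G.conv_conv_smul_eq_zero hab u h u).imp
      ?_ ?_ <;>
    · intro h
      simpa [u, hxU] using congrFun h x
  exact NoZeroDivisors.to_isDomain R

/-- If the convolution algebra `RG` of an ample groupoid is a
prime ring, then `R` is an integral domain. -/
theorem stmt5 (R : Type) [CommRing R] (G : EtaleGroupoid) (hample : G.Ample)
    (hprime : G.AlgPrime R) : IsDomain R :=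
  stmt5_general R G hprime
end

section
/- Let R be a commutative unital ring and G an ample groupoid. If the convolution algebra RG is a prime ring, then G is topologically transitive. -/
universe u

namespace EtaleGroupoid

variable (G : EtaleGroupoid)

lemma mem_units_iff {g : G.Arr} : g ∈ G.units ↔ G.d g = g := by
  constructor
  · rintro ⟨h, rfl⟩; exact G.d_d h
  · intro h; exact ⟨g, h⟩

lemma isOpen_units : IsOpen G.units := by
  rw [isOpen_iff_forall_mem_open]
  intro u hu
  obtain ⟨U, hUo, huU, _, himg⟩ := G.etale u
  refine ⟨U ∩ G.d '' U, ?_, ?_, huU, ⟨u, huU, (G.mem_units_iff.mp hu)⟩⟩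
  · rintro g ⟨-, ⟨h, -, rfl⟩⟩; exact ⟨h, rfl⟩
  · exact hUo.inter (himg U le_rfl hUo)

lemma unitsOpen_isOpen {U : Set G.Arr} (hU : G.UnitsOpen U) : IsOpen U := by
  obtain ⟨O, hOo, hOe⟩ := isOpen_induced_iff.mp hU.2
  have : U = O ∩ G.units := by
    ext x
    constructor
    · intro hx
      have hxu : x ∈ G.units := hU.1 hx
      have : (⟨x, hxu⟩ : G.units) ∈ (Subtype.val ⁻¹' O : Set ↥G.units) := by
        rw [hOe]; exact hx
      exact ⟨this, hxu⟩
    · rintro ⟨hxO, hxu⟩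
      have : (⟨x, hxu⟩ : G.units) ∈ (Subtype.val ⁻¹' O : Set ↥G.units) := hxO
      rw [hOe] at this; exact this
  rw [this]
  exact hOo.inter G.isOpen_units

lemma inv_unit {u : G.Arr} (hu : u ∈ G.units) : G.inv u = u := by
  have hd : G.d u = u := G.mem_units_iff.mp hu
  have h1 : G.comp (G.inv u) (G.d (G.inv u)) = G.inv u := G.comp_unit_right _
  have hr : G.r u = u := by rw [← hd, G.r_d, hd]
  rw [G.d_inv, hr] at h1
  calc G.inv u = G.comp (G.inv u) u := h1.symm
    _ = G.d u := G.inv_comp u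
    _ = u := hd

lemma eq_of_comp_inv_unit {x h : G.Arr} (hdh : G.d h = G.d x)
    (hu : G.comp x (G.inv h) ∈ G.units) : h = x := by
  have hcomp : G.d x = G.r (G.inv h) := by rw [G.r_inv, hdh]
  have hdu : G.d (G.comp x (G.inv h)) = G.r h := by
    rw [G.d_comp _ _ hcomp, G.d_inv]
  have huu : G.comp x (G.inv h) = G.r h := by
    rw [← hdu]; exact (G.mem_units_iff.mp hu).symm
  have := G.comp_assoc x (G.inv h) h hcomp (by rw [G.d_inv])
  rw [huu, G.inv_comp, hdh, G.comp_unit_right, G.comp_unit_left] at this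
  exact this

open Classical in
lemma conv_indicator_right {R : Type} [CommRing R] {L : Set G.Arr}
    (hL : L ⊆ G.units) (p : G.Arr → R) (x : G.Arr) :
    G.conv p (Set.indicator L fun _ => (1 : R)) x
      = p x * Set.indicator L (fun _ => (1 : R)) (G.d x) := by
  unfold conv
  have key : ∀ h : G.Arr,
      (∑ᶠ _ : G.d h = G.d x, p (G.comp x (G.inv h)) *
        Set.indicator L (fun _ => (1 : R)) h)
      = if G.d h = G.d x then p (G.comp x (G.inv h)) *
        Set.indicator L (fun _ => (1 : R)) h else 0 := fun h => finsum_eq_if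
  calc (∑ᶠ (h : G.Arr) (_ : G.d h = G.d x), p (G.comp x (G.inv h)) *
        Set.indicator L (fun _ => (1 : R)) h)
      = ∑ᶠ (h : G.Arr), if G.d h = G.d x then p (G.comp x (G.inv h)) *
          Set.indicator L (fun _ => (1 : R)) h else 0 := by
        exact finsum_congr key
    _ = p x * Set.indicator L (fun _ => (1 : R)) (G.d x) := by
        rw [finsum_eq_single _ (G.d x)]
        · rw [if_pos (G.d_d x), G.inv_unit ⟨x, rfl⟩, G.comp_unit_right]
        · intro h hne
          by_cases hd : G.d h = G.d x
          · rw [if_pos hd]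
            have hnL : h ∉ L := by
              intro hhL
              exact hne (by rw [← G.mem_units_iff.mp (hL hhL), hd])
            rw [Set.indicator_of_notMem hnL, mul_zero]
          · rw [if_neg hd]

open Classical in
lemma conv_indicator_left {R : Type} [CommRing R] {K : Set G.Arr}
    (hK : K ⊆ G.units) (p : G.Arr → R) (x : G.Arr) :
    G.conv (Set.indicator K fun _ => (1 : R)) p x
      = Set.indicator K (fun _ => (1 : R)) (G.r x) * p x := by
  unfold conv
  have key : ∀ h : G.Arr,
      (∑ᶠ _ : G.d h = G.d x, Set.indicator K (fun _ => (1 : R))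
        (G.comp x (G.inv h)) * p h)
      = if G.d h = G.d x then Set.indicator K (fun _ => (1 : R))
        (G.comp x (G.inv h)) * p h else 0 := fun h => finsum_eq_if
  calc (∑ᶠ (h : G.Arr) (_ : G.d h = G.d x), Set.indicator K (fun _ => (1 : R))
        (G.comp x (G.inv h)) * p h)
      = ∑ᶠ (h : G.Arr), if G.d h = G.d x then Set.indicator K (fun _ => (1 : R))
          (G.comp x (G.inv h)) * p h else 0 := finsum_congr key
    _ = Set.indicator K (fun _ => (1 : R)) (G.r x) * p x := by
        rw [finsum_eq_single _ x]
        · rw [if_pos rfl, G.comp_inv]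
        · intro h hne
          by_cases hd : G.d h = G.d x
          · rw [if_pos hd]
            have hnK : G.comp x (G.inv h) ∉ K := by
              intro hmem
              exact hne (G.eq_of_comp_inv_unit hd (hK hmem))
            rw [Set.indicator_of_notMem hnK, zero_mul]
          · rw [if_neg hd]

lemma indicator_mem_algebraSet {R : Type} [CommRing R] {K : Set G.Arr}
    (hc : IsCompact K) (ho : IsOpen K) :
    (Set.indicator K fun _ => (1 : R)) ∈ G.AlgebraSet R :=
  Submodule.subset_span ⟨K, hc, ho, rfl⟩

end EtaleGroupoid

/-- If the convolution algebra `RG` of an ample groupoid is a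
prime ring, then `G` is topologically transitive. -/
theorem stmt6 (R : Type) [CommRing R] (G : EtaleGroupoid) (hample : G.Ample)
    (hprime : G.AlgPrime R) : G.TopTransitive := by
  -- First, R is nontrivial
  have hR : (1 : R) ≠ 0 := by
    intro h10
    obtain ⟨f, -, hf⟩ := hprime.1
    apply hf
    funext x
    calc f x = f x * 1 := (mul_one _).symm
      _ = f x * 0 := by rw [h10]
      _ = 0 := mul_zero _
  intro U hUopen hUinv ⟨x₀, hx₀⟩
  by_contra hnd
  -- get a nonempty open set in the units disjoint from U
  rw [EtaleGroupoid.UnitsDense, dense_iff_inter_open] at hnd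
  push_neg at hnd
  obtain ⟨W', hW'o, hW'ne, hW'disj⟩ := hnd
  obtain ⟨⟨y₀, hy₀u⟩, hy₀W'⟩ := hW'ne
  set W : Set G.Arr := Subtype.val '' W' with hWdef
  have hWsub : W ⊆ G.units := by rintro w ⟨w', -, rfl⟩; exact w'.2
  have hWopen : G.UnitsOpen W := by
    refine ⟨hWsub, ?_⟩
    have : (Subtype.val ⁻¹' W : Set ↥G.units) = W' := by
      ext z
      simp only [Set.mem_preimage, hWdef, Set.mem_image]
      constructor
      · rintro ⟨z', hz', hzz⟩
        rwa [Subtype.val_injective hzz] at hz'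
      · intro hz; exact ⟨z, hz, rfl⟩
    rw [this]; exact hW'o
  have hWU : ∀ w ∈ W, w ∉ U := by
    rintro w ⟨w', hw', rfl⟩ hwU
    exact Set.eq_empty_iff_forall_notMem.mp hW'disj w' ⟨hw', hwU⟩
  have hy₀W : y₀ ∈ W := ⟨⟨y₀, hy₀u⟩, hy₀W', rfl⟩
  -- compact open pieces
  obtain ⟨K, hKU, hxK, hKc, hKopen⟩ :=
    hample.2 x₀ (hUopen.1 hx₀) U hUopen hx₀
  obtain ⟨L, hLW, hyL, hLc, hLopen⟩ :=
    hample.2 y₀ (hWsub hy₀W) W hWopen hy₀W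
  have hKsub : K ⊆ G.units := fun k hk => hUopen.1 (hKU hk)
  have hLsub : L ⊆ G.units := fun l hl => hWsub (hLW hl)
  -- no arrow from L to K
  have hno : ∀ x : G.Arr, G.d x ∈ L → G.r x ∉ K := by
    intro x hdx hrx
    have h1 : G.d (G.inv x) ∈ U := by rw [G.d_inv]; exact hKU hrx
    have h2 : G.r (G.inv x) ∈ U := hUinv _ h1
    rw [G.r_inv] at h2
    exact hWU _ (hLW hdx) h2
  -- apply primeness to the indicators
  set f : G.Arr → R := Set.indicator K fun _ => (1 : R) with hfdef
  set g : G.Arr → R := Set.indicator L fun _ => (1 : R) with hgdef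
  have hfmem : f ∈ G.AlgebraSet R :=
    G.indicator_mem_algebraSet hKc (G.unitsOpen_isOpen hKopen)
  have hgmem : g ∈ G.AlgebraSet R :=
    G.indicator_mem_algebraSet hLc (G.unitsOpen_isOpen hLopen)
  have hzero : ∀ h ∈ G.AlgebraSet R, G.conv (G.conv f h) g = 0 := by
    intro h _
    funext x
    rw [G.conv_indicator_right hLsub]
    by_cases hdx : G.d x ∈ L
    · rw [G.conv_indicator_left hKsub,
        Set.indicator_of_notMem (hno x hdx), zero_mul, zero_mul]
      rfl
    · rw [Set.indicator_of_notMem hdx, mul_zero]; rfl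
  rcases hprime.2 f hfmem g hgmem hzero with hf0 | hg0
  · have : f x₀ = 0 := by rw [hf0]; rfl
    rw [hfdef, Set.indicator_of_mem hxK] at this
    exact hR this
  · have : g y₀ = 0 := by rw [hg0]; rfl
    rw [hgdef, Set.indicator_of_mem hyL] at this
    exact hR this
end

section
/- Let G be an ample groupoid and R a commutative ring with unit. If the set Z of points x in the unit space for which the isotropy group algebra RG_x is semiprime is R-dense, then the convolution algebra RG is a semiprime ring. -/
universe u

namespace EtaleGroupoid

variable (G : EtaleGroupoid)

/-- The isotropy group of `G` at a unit `x`. -/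
def IsoGrp (x : G.Arr) : Type _ := {g : G.Arr // G.d g = x ∧ G.r g = x}

/-- The group structure on the isotropy group at a unit `x`. -/
def isoGroup (x : G.Arr) (hx : G.d x = x) : Group (G.IsoGrp x) where
  mul a b := ⟨G.comp a.1 b.1, by
    have hc : G.d a.1 = G.r b.1 := by rw [a.2.1, b.2.2]
    exact ⟨by rw [G.d_comp _ _ hc, b.2.1], by rw [G.r_comp _ _ hc, a.2.2]⟩⟩
  one := ⟨x, hx, by rw [← hx]; exact G.r_d x⟩
  inv a := ⟨G.inv a.1, by rw [G.d_inv, a.2.2], by rw [G.r_inv, a.2.1]⟩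
  mul_assoc a b c := Subtype.ext (G.comp_assoc _ _ _
    (by rw [a.2.1, b.2.2]) (by rw [b.2.1, c.2.2]))
  one_mul a := Subtype.ext (by
    have h := G.comp_unit_left a.1
    rw [a.2.2] at h
    exact h)
  mul_one a := Subtype.ext (by
    have h := G.comp_unit_right a.1
    rw [a.2.1] at h
    exact h)
  inv_mul_cancel a := Subtype.ext (by
    show G.comp (G.inv a.1) a.1 = x
    rw [G.inv_comp, a.2.1])

end EtaleGroupoid

/-! Suppose `f ⋆ h ⋆ f = 0` for all `h ∈ RG` but `f ≠ 0`. By `R`-density there is an arrow `g`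
with `f g ≠ 0` such that `R G_x` is semiprime, `x = d g`. Restricting `f` to the coset `g G_x`
gives `a ∈ R G_x`, `a γ = f (g γ)`, with `a 1 = f g ≠ 0`. For `γ ∈ G_x`, ampleness provides a
compact open bisection `C` through `γ g⁻¹` whose domain avoids the finitely many ranges
`r h ≠ r g` of arrows `h` in the support of `f` with `d h = x`; then `a γ a` is the restriction of
`f ⋆ 1_C ⋆ f = 0` to `g G_x`. Hence `a (R G_x) a = 0`, contradicting semiprimeness of `R G_x`. -/

namespace EtaleGroupoid

variable (G : EtaleGroupoid)

lemma comp_unit_left_of_eq {a u : G.Arr} (h : G.r a = u) : G.comp u a = a :=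
  h ▸ G.comp_unit_left a

lemma eq_inv_of_comp_eq_d {c g : G.Arr} (hcg : G.d c = G.r g) (h : G.comp c g = G.d g) :
    c = G.inv g := by
  calc c = G.comp c (G.comp g (G.inv g)) := by rw [G.comp_inv, ← hcg, G.comp_unit_right]
    _ = G.inv g := by
      rw [← G.comp_assoc c g (G.inv g) hcg (G.r_inv g).symm, h]
      exact G.comp_unit_left_of_eq (G.r_inv g)

lemma inv_comp_rev {a b : G.Arr} (h : G.d a = G.r b) :
    G.inv (G.comp a b) = G.comp (G.inv b) (G.inv a) := by
  have hba : G.d (G.inv b) = G.r (G.inv a) := by rw [G.d_inv, G.r_inv, h]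
  refine (G.eq_inv_of_comp_eq_d ?_ ?_).symm
  · rw [G.d_comp _ _ hba, G.d_inv, G.r_comp _ _ h]
  · rw [G.d_comp _ _ h, G.comp_assoc _ _ _ hba (by rw [G.d_inv, G.r_comp _ _ h]),
      ← G.comp_assoc (G.inv a) a b (G.d_inv a) h, G.inv_comp, h, G.comp_unit_left, G.inv_comp]

lemma inv_comp_cancel_left {u a : G.Arr} (h : G.d u = G.r a) :
    G.comp (G.inv u) (G.comp u a) = a := by
  rw [← G.comp_assoc _ _ _ (G.d_inv u) h, G.inv_comp]
  exact G.comp_unit_left_of_eq h.symm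

lemma comp_inv_cancel_left {u a : G.Arr} (h : G.r u = G.r a) :
    G.comp u (G.comp (G.inv u) a) = a := by
  rw [← G.comp_assoc _ _ _ (G.r_inv u).symm (by rw [G.d_inv, h]), G.comp_inv]
  exact G.comp_unit_left_of_eq h.symm

lemma d_comp_inv {y h : G.Arr} (hh : G.d h = G.d y) : G.d (G.comp y (G.inv h)) = G.r h := by
  rw [G.d_comp _ _ (by rw [G.r_inv, hh]), G.d_inv]

lemma comp_left_cancel {u a b : G.Arr} (ha : G.d u = G.r a) (hb : G.d u = G.r b)
    (h : G.comp u a = G.comp u b) : a = b := by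
  rw [← G.inv_comp_cancel_left ha, h, G.inv_comp_cancel_left hb]

lemma comp_inv_comp_inv_translate {u δ γ ε : G.Arr}
    (hδd : G.d δ = G.d u) (hδr : G.r δ = G.d u) (hγd : G.d γ = G.d u) (hγr : G.r γ = G.d u)
    (hεd : G.d ε = G.d u) :
    G.comp (G.comp (G.comp u δ) (G.inv (G.comp u γ))) (G.inv (G.comp ε (G.inv u)))
      = G.comp u (G.comp (G.comp δ (G.inv γ)) (G.inv ε)) := by
  have hγ : G.d (G.inv γ) = G.r (G.inv u) := by rw [G.d_inv, G.r_inv, hγr]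
  have hε : G.r (G.inv ε) = G.d u := by rw [G.r_inv, hεd]
  have hδγ : G.d δ = G.r (G.inv γ) := by rw [G.r_inv, hγd, hδd]
  have hγε : G.d (G.inv γ) = G.r (G.inv ε) := by rw [G.d_inv, hγr, hε]
  rw [G.inv_comp_rev hγr.symm, G.inv_comp_rev (by rw [G.r_inv, hεd]), G.inv_inv,
    G.comp_assoc _ _ _ (by rw [G.d_comp _ _ hδr.symm, G.r_comp _ _ hγ, G.r_inv, hγd, hδd])
      (by rw [G.d_comp _ _ hγ, G.d_inv, G.r_comp _ _ hε.symm]),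
    G.comp_assoc _ _ _ hγ (by rw [G.d_inv, G.r_comp _ _ hε.symm]),
    G.inv_comp_cancel_left hε.symm,
    G.comp_assoc _ _ _ hδr.symm (by rw [G.r_comp _ _ hγε, G.r_inv, hγd, hδd]),
    G.comp_assoc _ _ _ hδγ hγε]

lemma UnitsOpen.isOpen {G : EtaleGroupoid} {K : Set G.Arr} (h : G.UnitsOpen K) : IsOpen K := by
  rw [← Set.inter_eq_self_of_subset_right h.1, ← Subtype.image_preimage_coe]
  exact G.isOpen_units.isOpenMap_subtype_val _ h.2

lemma isCompact_inter_preimage_d {U K : Set G.Arr} (hU : IsOpen U) (hinj : Set.InjOn G.d U)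
    (himg : ∀ V ⊆ U, IsOpen V → IsOpen (G.d '' V)) (hK : IsCompact K) (hKU : K ⊆ G.d '' U) :
    IsCompact (U ∩ G.d ⁻¹' K) := by
  have hopen : IsOpenMap (U.domRestrict G.d) := fun V hV => by
    rw [Set.domRestrict_eq, Set.image_comp]
    exact himg _ (Subtype.coe_image_subset U V) (hU.isOpenMap_subtype_val V hV)
  have hemb : Topology.IsOpenEmbedding (U.domRestrict G.d) :=
    .of_continuous_injective_isOpenMap (G.continuous_d.comp continuous_subtype_val)
      hinj.injective hopen
  have hcpt := (hemb.isInducing.isCompact_preimage' hK (by rwa [Set.range_domRestrict])).image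
    continuous_subtype_val
  rwa [Set.domRestrict_eq, Set.preimage_comp, Subtype.image_preimage_coe] at hcpt

lemma finite_inter_fiber_of_isCompact {K : Set G.Arr} (hK : IsCompact K) (x : G.Arr) :
    (K ∩ G.d ⁻¹' {x}).Finite := by
  choose U hUopen hUmem hUinj _ using G.etale
  obtain ⟨t, ht⟩ := hK.elim_finite_subcover U hUopen fun g _ => Set.mem_iUnion.2 ⟨g, hUmem g⟩
  refine (t.finite_toSet.biUnion fun g _ => Set.Subsingleton.finite (s := U g ∩ G.d ⁻¹' {x})
    fun a ha b hb => hUinj g ha.1 hb.1 (ha.2.trans hb.2.symm)).subset ?_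
  rintro h ⟨hhK, hhx⟩
  obtain ⟨g, hg, hhU⟩ := Set.mem_iUnion₂.1 (ht hhK)
  exact Set.mem_biUnion hg ⟨hhU, hhx⟩

lemma finite_support_inter_fiber {R : Type} [CommRing R] {f : G.Arr → R}
    (hf : f ∈ G.AlgebraSet R) (x : G.Arr) : (Function.support f ∩ G.d ⁻¹' {x}).Finite := by
  induction hf using Submodule.span_induction with
  | mem g hg =>
    obtain ⟨U, hU, -, rfl⟩ := hg
    exact (G.finite_inter_fiber_of_isCompact hU x).subset
      (Set.inter_subset_inter_left _ Set.support_indicator_subset)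
  | zero => simp
  | add g h _ _ hg hh =>
    exact (hg.union hh).subset (Set.union_inter_distrib_right _ _ _ ▸
      Set.inter_subset_inter_left _ (Function.support_add g h))
  | smul c g _ hg =>
    exact hg.subset (Set.inter_subset_inter_left _ (Function.support_const_smul_subset c g))

lemma Ample.exists_bisection {G : EtaleGroupoid} (hG : G.Ample) {t : G.Arr} {B : Set G.Arr}
    (hB : B.Finite) (htB : G.d t ∉ B) :
    ∃ C : Set G.Arr, IsCompact C ∧ IsOpen C ∧ t ∈ C ∧ Set.InjOn G.d C ∧
      Disjoint (G.d '' C) B := by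
  obtain ⟨hT2, hbasis⟩ := hG
  obtain ⟨U, hU, htU, hinj, himg⟩ := G.etale t
  have hV : G.UnitsOpen (G.d '' U \ B) := by
    refine ⟨fun _ hy => Set.image_subset_range _ _ hy.1, ?_⟩
    rw [Set.preimage_sdiff]
    exact ((himg U subset_rfl hU).preimage continuous_subtype_val).sdiff
      (hB.preimage Subtype.val_injective.injOn).isClosed
  obtain ⟨K, hKV, htK, hK, hKo⟩ := hbasis (G.d t) ⟨t, rfl⟩ _ hV ⟨⟨t, htU, rfl⟩, htB⟩
  refine ⟨U ∩ G.d ⁻¹' K,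
    G.isCompact_inter_preimage_d hU hinj himg hK fun y hy => (hKV hy).1,
    hU.inter (hKo.isOpen.preimage G.continuous_d), ⟨htU, htK⟩,
    hinj.mono Set.inter_subset_left, ?_⟩
  rw [Set.disjoint_left]
  rintro _ ⟨w, hw, rfl⟩
  exact (hKV hw.2).2

section Convolution

variable {R : Type} [CommRing R]

lemma conv_apply_eq_sum (f g : G.Arr → R) {y : G.Arr} {s : Finset G.Arr}
    (hs : ∀ h, f (G.comp y (G.inv h)) * g h ≠ 0 → (G.d h = G.d y ↔ h ∈ s)) :
    G.conv f g y = ∑ h ∈ s, f (G.comp y (G.inv h)) * g h :=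
  finsum_cond_eq_sum_of_cond_iff _ (hs _)

lemma conv_indicator_apply_of_mem (f : G.Arr → R) {C : Set G.Arr} (hC : Set.InjOn G.d C)
    {t y : G.Arr} (ht : t ∈ C) (hy : G.d y = G.d t) :
    G.conv f (C.indicator fun _ => 1) y = f (G.comp y (G.inv t)) := by
  classical
  rw [G.conv_apply_eq_sum f _ (s := {t}), Finset.sum_singleton, Set.indicator_of_mem ht, mul_one]
  intro h hne
  have hh : h ∈ C := Set.mem_of_indicator_ne_zero (right_ne_zero_of_mul hne)
  rw [Finset.mem_singleton, hy]
  exact ⟨fun hd => hC hh ht hd, fun h => h ▸ rfl⟩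

lemma conv_indicator_apply_of_notMem (f : G.Arr → R) {C : Set G.Arr} {y : G.Arr}
    (hy : G.d y ∉ G.d '' C) : G.conv f (C.indicator fun _ => 1) y = 0 := by
  rw [G.conv_apply_eq_sum f _ (s := ∅), Finset.sum_empty]
  intro h hne
  have hh : h ∈ C := Set.mem_of_indicator_ne_zero (right_ne_zero_of_mul hne)
  simp only [Finset.notMem_empty, iff_false]
  exact fun hd => hy ⟨h, hh, hd⟩

end Convolution

instance (g : G.Arr) : Group (G.IsoGrp (G.d g)) := G.isoGroup (G.d g) (G.d_d g)

section CosetRestrict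

variable {R : Type} [CommRing R] {f : G.Arr → R}

lemma d_comp_isoGrp (g : G.Arr) (γ : G.IsoGrp (G.d g)) : G.d (G.comp g γ.1) = G.d g :=
  (G.d_comp _ _ γ.2.2.symm).trans γ.2.1

lemma r_comp_isoGrp (g : G.Arr) (γ : G.IsoGrp (G.d g)) : G.r (G.comp g γ.1) = G.r g :=
  G.r_comp _ _ γ.2.2.symm

lemma d_comp_inv_isoGrp (g : G.Arr) (γ : G.IsoGrp (G.d g)) :
    G.d (G.comp γ.1 (G.inv g)) = G.r g :=
  G.d_comp_inv γ.2.1.symm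

lemma comp_left_injective (g : G.Arr) :
    Function.Injective fun γ : G.IsoGrp (G.d g) => G.comp g γ.1 :=
  fun γ δ h => Subtype.ext (G.comp_left_cancel γ.2.2.symm δ.2.2.symm h)

lemma finite_support_comp_left (hf : f ∈ G.AlgebraSet R) (g : G.Arr) :
    (Function.support fun γ : G.IsoGrp (G.d g) => f (G.comp g γ.1)).Finite := by
  refine Set.Finite.of_finite_image ((G.finite_support_inter_fiber hf (G.d g)).subset ?_)
    (G.comp_left_injective g).injOn
  rintro _ ⟨γ, hγ, rfl⟩
  exact ⟨hγ, G.d_comp_isoGrp g γ⟩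

noncomputable def cosetRestrict (hf : f ∈ G.AlgebraSet R) (g : G.Arr) :
    MonoidAlgebra R (G.IsoGrp (G.d g)) :=
  .ofCoeff (.ofSupportFinite _ (G.finite_support_comp_left hf g))

lemma coeff_cosetRestrict (hf : f ∈ G.AlgebraSet R) (g : G.Arr) (γ : G.IsoGrp (G.d g)) :
    (G.cosetRestrict hf g).coeff γ = f (G.comp g γ.1) :=
  rfl

lemma coeff_cosetRestrict_one (hf : f ∈ G.AlgebraSet R) (g : G.Arr) :
    (G.cosetRestrict hf g).coeff 1 = f g :=
  congrArg f (G.comp_unit_right g)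

lemma conv_indicator_apply_coset {C : Set G.Arr} (hC : Set.InjOn G.d C) (g : G.Arr)
    {γ : G.IsoGrp (G.d g)} (hγC : G.comp γ.1 (G.inv g) ∈ C) (δ q : G.IsoGrp (G.d g)) :
    G.conv f (C.indicator fun _ => 1) (G.comp (G.comp g δ.1) (G.inv (G.comp g q.1)))
      = f (G.comp g (δ * q⁻¹ * γ⁻¹).1) := by
  rw [G.conv_indicator_apply_of_mem f hC hγC]
  · exact congrArg f (G.comp_inv_comp_inv_translate δ.2.1 δ.2.2 q.2.1 q.2.2 γ.2.1)
  · rw [G.d_comp_inv ((G.d_comp_isoGrp g q).trans (G.d_comp_isoGrp g δ).symm),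
      G.r_comp_isoGrp, G.d_comp_inv_isoGrp]

lemma coeff_cosetRestrict_mul_single_mul (hf : f ∈ G.AlgebraSet R) (g : G.Arr)
    (γ δ : G.IsoGrp (G.d g)) {C : Set G.Arr} (hC : Set.InjOn G.d C)
    (hγC : G.comp γ.1 (G.inv g) ∈ C)
    (hCf : ∀ h, f h ≠ 0 → G.d h = G.d g → G.r h ∈ G.d '' C → G.r h = G.r g) :
    (G.cosetRestrict hf g * .single γ 1 * G.cosetRestrict hf g).coeff δ
      = G.conv (G.conv f (C.indicator fun _ => 1)) f (G.comp g δ.1) := by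
  classical
  set a := G.cosetRestrict hf g
  set ξ := G.comp g δ.1
  have hξ : G.d ξ = G.d g := G.d_comp_isoGrp g δ
  -- Only arrows of the coset `g G_{d g}` contribute, by the choice of `C`.
  have hsupport : ∀ h, G.conv f (C.indicator fun _ => 1) (G.comp ξ (G.inv h)) * f h ≠ 0 →
      (G.d h = G.d ξ ↔ h ∈ a.coeff.support.image fun q => G.comp g q.1) := by
    intro h hne
    refine ⟨fun hh => ?_, fun hh => ?_⟩
    · have hrh : G.r h = G.r g := hCf h (right_ne_zero_of_mul hne) (hh.trans hξ) <| by
        by_contra hnot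
        exact left_ne_zero_of_mul hne (G.conv_indicator_apply_of_notMem f (G.d_comp_inv hh ▸ hnot))
      have hcomp : G.d (G.inv g) = G.r h := by rw [G.d_inv, hrh]
      let q : G.IsoGrp (G.d g) := ⟨G.comp (G.inv g) h, (G.d_comp _ _ hcomp).trans (hh.trans hξ),
        (G.r_comp _ _ hcomp).trans (G.r_inv g)⟩
      have hgq : G.comp g q.1 = h := G.comp_inv_cancel_left hrh.symm
      refine Finset.mem_image.2 ⟨q, Finsupp.mem_support_iff.2 ?_, hgq⟩
      rw [G.coeff_cosetRestrict, hgq]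
      exact right_ne_zero_of_mul hne
    · obtain ⟨q, -, rfl⟩ := Finset.mem_image.1 hh
      exact (G.d_comp_isoGrp g q).trans hξ.symm
  rw [MonoidAlgebra.coeff_mul_apply_right, Finsupp.sum, G.conv_apply_eq_sum _ _ hsupport,
    Finset.sum_image (G.comp_left_injective g).injOn]
  refine Finset.sum_congr rfl fun q _ => ?_
  rw [MonoidAlgebra.coeff_mul_single_apply, mul_one, G.conv_indicator_apply_coset hC g hγC]
  rfl

lemma cosetRestrict_mul_mul_eq_zero (hG : G.Ample) (hf : f ∈ G.AlgebraSet R)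
    (hsq : ∀ h ∈ G.AlgebraSet R, G.conv (G.conv f h) f = 0) (g : G.Arr)
    (c : MonoidAlgebra R (G.IsoGrp (G.d g))) :
    G.cosetRestrict hf g * c * G.cosetRestrict hf g = 0 := by
  induction c using MonoidAlgebra.induction_on with
  | add p q hp hq => rw [mul_add, add_mul, hp, hq, add_zero]
  | smul r p hp => rw [mul_smul_comm, smul_mul_assoc, hp, smul_zero]
  | of γ =>
    obtain ⟨C, hCc, hCo, hγC, hCinj, hCB⟩ := hG.exists_bisection
      (((G.finite_support_inter_fiber hf (G.d g)).image G.r).sdiff (t := {G.r g}))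
      fun h => h.2 (G.d_comp_inv_isoGrp g γ)
    ext δ
    rw [MonoidAlgebra.of_apply, G.coeff_cosetRestrict_mul_single_mul hf g γ δ hCinj hγC ?_,
      hsq _ (Submodule.subset_span ⟨C, hCc, hCo, rfl⟩)]
    · rfl
    · intro h hfh hdh hrh
      by_contra hne
      exact Set.disjoint_left.1 hCB hrh ⟨⟨h, ⟨hfh, hdh⟩, rfl⟩, hne⟩

end CosetRestrict

end EtaleGroupoid

/-- If the set of units `x` whose isotropy group algebra `R G_x`
is semiprime is `R`-dense, then the convolution algebra `RG` is semiprime. -/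
theorem stmt11 (R : Type) [CommRing R] (G : EtaleGroupoid) (hample : G.Ample)
    (hdense : G.RDense R {x : G.Arr | ∃ hx : G.d x = x,
      letI := G.isoGroup x hx
      ∀ a : MonoidAlgebra R (G.IsoGrp x),
        (∀ c : MonoidAlgebra R (G.IsoGrp x), a * c * a = 0) → a = 0}) :
    G.AlgSemiprime R := by
  intro f hf hsq
  by_contra hf0
  obtain ⟨g, hfg, _, hsemiprime⟩ := hdense f hf hf0
  have hzero := hsemiprime _ (G.cosetRestrict_mul_mul_eq_zero hample hf hsq g)
  apply hfg
  rw [← G.coeff_cosetRestrict_one hf g, hzero]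
  rfl
end
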